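/- Let r ≥ 1 and let a = (a_1,...,a_n) ∈ E^n be a local minimum of the L^r-distortion function G whose components are non-isolated points of supp(P). Then for every i and every Borel set C with W_{a_i}(Γ) ⊆ C ⊆ V_{a_i}(Γ) (where Γ = {a_1,...,a_n}), the point a_i minimizes y ↦ ∫_C ‖x - y‖^r dP(x) over y ∈ E. -/

import Mathlib

open MeasureTheory EMetric

def measureSupport {E : Type*} [TopologicalSpace E] [MeasurableSpace E]
    (P : Measure E) : Set E :=
  {x : E | ∀ U : Set E, IsOpen U → x ∈ U → 0 < P U}

/-! Let `f y = ∫_C ‖x - y‖ ^ r dP(x)`. Moving the centre `a i` to `y` can decrease the distance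
from `x` to its nearest centre only for `x ∈ C`: outside `C` the point `x` is not in the open
Voronoi cell of `a i`, so another centre, which does not move, is at least as close. On `C` the
nearest distance is `‖x - a i‖` before and at most `‖x - y‖` after. Hence
`G a ≤ G (update a i y) ≤ G a + f y - f (a i)`, so `f` has a local minimum at `a i`; and `f` is
convex because `r ≥ 1`, so this local minimum is global. -/

open Set Function Metric Filter Topology

section Voronoi

variable {E : Type*} [NormedAddCommGroup E] {ι : Type*}

theorem iInf_norm_sub_le (x : E) (b : ι → E) (i : ι) : ⨅ j, ‖x - b j‖ ≤ ‖x - b i‖ :=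
  ciInf_le ⟨0, by rintro _ ⟨j, rfl⟩; positivity⟩ i

theorem edist_le_edist_iff_norm_sub_le (x u v : E) :
    edist x u ≤ edist x v ↔ ‖x - u‖ ≤ ‖x - v‖ := by
  rw [edist_dist, edist_dist, ENNReal.ofReal_le_ofReal_iff dist_nonneg, dist_eq_norm,
    dist_eq_norm]

theorem iInf_norm_sub_eq_of_edist_eq_infEDist {b : ι → E} {i : ι} {x : E}
    (hx : edist x (b i) = infEDist x (range b)) : ⨅ j, ‖x - b j‖ = ‖x - b i‖ := by
  have : Nonempty ι := ⟨i⟩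
  refine le_antisymm (iInf_norm_sub_le x b i) (le_ciInf fun j ↦ ?_)
  rw [← edist_le_edist_iff_norm_sub_le, hx]
  exact infEDist_le_edist_of_mem (mem_range_self j)

theorem iInf_norm_sub_update_le [Finite ι] [DecidableEq ι] {b : ι → E} {i : ι} {x : E} (y : E)
    (hx : infEDist x (range b \ {b i}) ≤ edist x (b i)) :
    ⨅ j, ‖x - update b i y j‖ ≤ ⨅ j, ‖x - b j‖ := by
  have : Nonempty ι := ⟨i⟩
  have hne : (range b \ {b i}).Nonempty := by
    by_contra h
    rw [not_nonempty_iff_eq_empty.1 h, infEDist_empty] at hx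
    exact (edist_lt_top x (b i)).not_ge hx
  obtain ⟨_, ⟨⟨k, rfl⟩, hk⟩, hxk⟩ :=
    (finite_range b).sdiff.isCompact.exists_infEDist_eq_edist hne x
  have hki : k ≠ i := by rintro rfl; exact hk rfl
  have hk_le : ∀ j, ‖x - b k‖ ≤ ‖x - b j‖ := fun j ↦ by
    rw [← edist_le_edist_iff_norm_sub_le, ← hxk]
    by_cases hj : b j = b i
    · rwa [hj]
    · exact infEDist_le_edist_of_mem ⟨mem_range_self j, hj⟩
  calc ⨅ j, ‖x - update b i y j‖ ≤ ‖x - update b i y k‖ := iInf_norm_sub_le x _ k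
    _ = ‖x - b k‖ := by rw [update_of_ne hki]
    _ ≤ ⨅ j, ‖x - b j‖ := le_ciInf hk_le

end Voronoi

section Distortion

variable {E : Type*} [NormedAddCommGroup E] [MeasurableSpace E] [OpensMeasurableSpace E]
  {μ : Measure E} [IsFiniteMeasure μ] {r : ℝ} {ι : Type*}

theorem integrable_norm_sub_rpow (hr : 0 < r) (hint : Integrable (fun x ↦ ‖x‖ ^ r) μ) (y : E) :
    Integrable (fun x ↦ ‖x - y‖ ^ r) μ := by
  have hr' : ENNReal.ofReal r ≠ 0 := by simpa using hr
  have hmeas : ∀ z : E, AEStronglyMeasurable (fun x ↦ ‖x - z‖) μ := fun z ↦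
    (continuous_id.sub continuous_const).norm.aestronglyMeasurable
  have hnorm : MemLp (fun x ↦ ‖x‖) (ENNReal.ofReal r) μ := by
    rw [← integrable_norm_rpow_iff (by simpa using hmeas 0) hr' ENNReal.ofReal_ne_top]
    simpa [ENNReal.toReal_ofReal hr.le] using hint
  have hsub : MemLp (fun x ↦ ‖x - y‖) (ENNReal.ofReal r) μ :=
    (hnorm.add (memLp_const ‖y‖)).mono (hmeas y) <| .of_forall fun x ↦ by
      simpa [abs_of_nonneg (add_nonneg (norm_nonneg x) (norm_nonneg y))] using norm_sub_le x y
  simpa [ENNReal.toReal_ofReal hr.le] using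
    (integrable_norm_rpow_iff (hmeas y) hr' ENNReal.ofReal_ne_top).2 hsub

theorem integrable_iInf_norm_sub_rpow [Finite ι] (hr : 0 < r)
    (hint : Integrable (fun x ↦ ‖x‖ ^ r) μ) (b : ι → E) (i : ι) :
    Integrable (fun x ↦ (⨅ j, ‖x - b j‖) ^ r) μ := by
  have hmeas : Measurable fun x : E ↦ ⨅ j, ‖x - b j‖ :=
    Measurable.iInf fun j ↦ (continuous_id.sub continuous_const).norm.measurable
  refine (integrable_norm_sub_rpow hr hint (b i)).mono'
    ((hmeas.pow_const r).aestronglyMeasurable) (.of_forall fun x ↦ ?_)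
  have h0 : 0 ≤ ⨅ j, ‖x - b j‖ := Real.iInf_nonneg fun _ ↦ norm_nonneg _
  rw [Real.norm_of_nonneg (Real.rpow_nonneg h0 r)]
  exact Real.rpow_le_rpow h0 (iInf_norm_sub_le x b i) hr.le

theorem isLocalMin_setIntegral_norm_sub_rpow [Finite ι] [DecidableEq ι] (hr : 0 < r)
    (hint : Integrable (fun x ↦ ‖x‖ ^ r) μ) {a : ι → E}
    (hmin : IsLocalMin (fun b : ι → E ↦ ∫ x, (⨅ j, ‖x - b j‖) ^ r ∂μ) a) {i : ι} {C : Set E}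
    (hC : MeasurableSet C) (hWC : {x | edist x (a i) < infEDist x (range a \ {a i})} ⊆ C)
    (hCV : C ⊆ {x | edist x (a i) = infEDist x (range a)}) :
    IsLocalMin (fun y ↦ ∫ x in C, ‖x - y‖ ^ r ∂μ) (a i) := by
  have hcont : Continuous fun y : E ↦ update a i y := by fun_prop
  have htend : Tendsto (update a i) (𝓝 (a i)) (𝓝 a) := by simpa using hcont.tendsto (a i)
  filter_upwards [htend.eventually hmin] with y hy
  set D : (ι → E) → E → ℝ := fun b x ↦ (⨅ j, ‖x - b j‖) ^ r
  have hD (b : ι → E) : Integrable (D b) μ := integrable_iInf_norm_sub_rpow hr hint b i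
  have hsplit (b : ι → E) : ∫ x, D b x ∂μ = ∫ x in C, D b x ∂μ + ∫ x in Cᶜ, D b x ∂μ :=
    (integral_add_compl hC (hD b)).symm
  have hin_eq : ∫ x in C, D a x ∂μ = ∫ x in C, ‖x - a i‖ ^ r ∂μ :=
    setIntegral_congr_fun hC fun x hx ↦ by
      simp only [D, iInf_norm_sub_eq_of_edist_eq_infEDist (hCV hx)]
  have hin_le : ∫ x in C, D (update a i y) x ∂μ ≤ ∫ x in C, ‖x - y‖ ^ r ∂μ :=
    setIntegral_mono_on (hD _).integrableOn (integrable_norm_sub_rpow hr hint y).integrableOn hC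
      fun x _ ↦ Real.rpow_le_rpow (Real.iInf_nonneg fun _ ↦ norm_nonneg _)
        (by simpa using iInf_norm_sub_le x (update a i y) i) hr.le
  have hout_le : ∫ x in Cᶜ, D (update a i y) x ∂μ ≤ ∫ x in Cᶜ, D a x ∂μ :=
    setIntegral_mono_on (hD _).integrableOn (hD a).integrableOn hC.compl fun x hx ↦
      Real.rpow_le_rpow (Real.iInf_nonneg fun _ ↦ norm_nonneg _)
        (iInf_norm_sub_update_le y (not_lt.1 fun h ↦ hx (hWC h))) hr.le
  linarith [hsplit a, hsplit (update a i y)]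

end Distortion

section Convexity

variable {E : Type*} [NormedAddCommGroup E] [NormedSpace ℝ E] {r : ℝ}

theorem convexOn_norm_sub_rpow (hr : 1 ≤ r) (x : E) :
    ConvexOn ℝ univ fun y : E ↦ ‖x - y‖ ^ r := by
  refine ⟨convex_univ, fun y _ z _ s t hs ht hst ↦ ?_⟩
  have hnorm : ‖x - (s • y + t • z)‖ ≤ s * ‖x - y‖ + t * ‖x - z‖ := by
    simpa only [dist_comm _ x, dist_eq_norm, smul_eq_mul] using
      (convexOn_dist x convex_univ).2 (mem_univ y) (mem_univ z) hs ht hst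
  calc ‖x - (s • y + t • z)‖ ^ r ≤ (s * ‖x - y‖ + t * ‖x - z‖) ^ r :=
        Real.rpow_le_rpow (norm_nonneg _) hnorm (by linarith)
    _ ≤ s • ‖x - y‖ ^ r + t • ‖x - z‖ ^ r :=
        (convexOn_rpow hr).2 (norm_nonneg (x - y)) (norm_nonneg (x - z)) hs ht hst

variable [MeasurableSpace E] [OpensMeasurableSpace E] {μ : Measure E} [IsFiniteMeasure μ]

theorem convexOn_integral_norm_sub_rpow (hr : 1 ≤ r) (hint : Integrable (fun x ↦ ‖x‖ ^ r) μ) :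
    ConvexOn ℝ univ fun y : E ↦ ∫ x, ‖x - y‖ ^ r ∂μ := by
  refine ⟨convex_univ, fun y _ z _ s t hs ht hst ↦ ?_⟩
  have hy := (integrable_norm_sub_rpow (by linarith) hint y).const_mul s
  have hz := (integrable_norm_sub_rpow (by linarith) hint z).const_mul t
  calc ∫ x, ‖x - (s • y + t • z)‖ ^ r ∂μ ≤ ∫ x, (s * ‖x - y‖ ^ r + t * ‖x - z‖ ^ r) ∂μ :=
        integral_mono (integrable_norm_sub_rpow (by linarith) hint _) (hy.add hz) fun x ↦
          (convexOn_norm_sub_rpow hr x).2 (mem_univ y) (mem_univ z) hs ht hst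
    _ = s • ∫ x, ‖x - y‖ ^ r ∂μ + t • ∫ x, ‖x - z‖ ^ r ∂μ := by
        rw [integral_add hy hz, integral_const_mul, integral_const_mul, smul_eq_mul, smul_eq_mul]

end Convexity

theorem local_min_component_is_conditional_optimum_general
    {E : Type*} [NormedAddCommGroup E] [NormedSpace ℝ E]
    [MeasurableSpace E] [BorelSpace E]
    (P : Measure E) [IsProbabilityMeasure P]
    (r : ℝ) (hr : 1 ≤ r) (hint : Integrable (fun x => ‖x‖ ^ r) P)
    (n : ℕ) (a : Fin n → E)
    (hmin : IsLocalMin (fun b : Fin n → E => ∫ x, (⨅ i, ‖x - b i‖) ^ r ∂P) a) :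
    ∀ i : Fin n, ∀ C : Set E, MeasurableSet C →
      {x : E | edist x (a i) < infEdist x (Set.range a \ {a i})} ⊆ C →
      C ⊆ {x : E | edist x (a i) = infEdist x (Set.range a)} →
      ∀ y : E, ∫ x in C, ‖x - a i‖ ^ r ∂P ≤ ∫ x in C, ‖x - y‖ ^ r ∂P := by
  intro i C hC hWC hCV
  exact IsMinOn.of_isLocalMin_of_convex_univ
    (isLocalMin_setIntegral_norm_sub_rpow (by linarith) hint hmin hC hWC hCV)
    (convexOn_integral_norm_sub_rpow hr hint.integrableOn)

/-- At a local minimum `a` of the `L^r`-distortion (`r ≥ 1`) with components that are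
non-isolated points of `supp(P)`, each `a i` minimizes `y ↦ ∫_C ‖x - y‖^r dP(x)`
for every Borel set `C` squeezed between the open and closed Voronoi cells of `a i`. -/
theorem local_min_component_is_conditional_optimum
    {E : Type*} [NormedAddCommGroup E] [NormedSpace ℝ E] [CompleteSpace E]
    [SecondCountableTopology E] [MeasurableSpace E] [BorelSpace E]
    (P : Measure E) [IsProbabilityMeasure P]
    (r : ℝ) (hr : 1 ≤ r) (hint : Integrable (fun x => ‖x‖ ^ r) P)
    (n : ℕ) (hn : 0 < n) (a : Fin n → E)
    (hmin : IsLocalMin (fun b : Fin n → E => ∫ x, (⨅ i, ‖x - b i‖) ^ r ∂P) a)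
    (hni : ∀ i, a i ∈ closure (measureSupport P \ {a i})) :
    ∀ i : Fin n, ∀ C : Set E, MeasurableSet C →
      {x : E | edist x (a i) < infEdist x (Set.range a \ {a i})} ⊆ C →
      C ⊆ {x : E | edist x (a i) = infEdist x (Set.range a)} →
      ∀ y : E, ∫ x in C, ‖x - a i‖ ^ r ∂P ≤ ∫ x in C, ‖x - y‖ ^ r ∂P :=
  local_min_component_is_conditional_optimum_general P r hr hint n a hmin
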